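/- Let Z = (X, A, Y) with A ∈ {0,1} and Y ∈ ℝ. Let p*(x) := P(A = 1 | X = x) satisfy η ≤ p*(x) ≤ 1 − η for some η > 0, let Q*(a, x) := E[Y | X = x, A = a] satisfy E[Q*(a, X)²] < ∞ for a ∈ {0,1}, and suppose E[Y²] < ∞. Define τ*(x) := Q*(1,x) − Q*(0,x), φ_β(u) := u·σ(βu), and the de-biased smoothed score Ψ^β(Z) := φ_β(τ*(X)) + α_0^β(A, X)·(Y − Q*(0, X)) + α_1^β(A, X)·(Y − Q*(1, X)), where α_1^β(a, x) := φ_β′(τ*(x))·a/p*(x) and α_0^β(a, x) := −φ_β′(τ*(x))·(1 − a)/(1 − p*(x)). Then sup_{β > 0} Var[Ψ^β(Z)] < ∞, and consequently for every deterministic sequence β_n → ∞, lim_{n→∞} Var[(1/β_n)·Ψ^{β_n}(Z)] = 0. -/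

import Mathlib

open MeasureTheory ProbabilityTheory Filter

/-- The sigmoid function `σ(x) = e^x / (1 + e^x)`. -/
noncomputable def sigmoid (x : ℝ) : ℝ := Real.exp x / (1 + Real.exp x)

/-- The softmax smoothing `φ_β(u) = u σ(βu)` of `u ↦ max{u, 0}`. -/
noncomputable def phiSm (β u : ℝ) : ℝ := u * sigmoid (β * u)

/-- `φ_β′`, the derivative of `φ_β`. -/
noncomputable def phiSm' (β u : ℝ) : ℝ := deriv (phiSm β) u

/-- The CATE `τ*(x) = Q*(1, x) − Q*(0, x)`. -/
noncomputable def tauStar {𝒳 : Type*} (Qstar : ℝ → 𝒳 → ℝ) (x : 𝒳) : ℝ :=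
  Qstar 1 x - Qstar 0 x

/-- The de-biased smoothed score
`Ψ^β(Z) = φ_β(τ*(X)) + α_0^β(A, X)(Y − Q*(0, X)) + α_1^β(A, X)(Y − Q*(1, X))` with
`α_1^β(a, x) = φ_β′(τ*(x)) a / p*(x)` and `α_0^β(a, x) = −φ_β′(τ*(x))(1 − a)/(1 − p*(x))`. -/
noncomputable def parkScore {Ω 𝒳 : Type*} (Qstar : ℝ → 𝒳 → ℝ) (pstar : 𝒳 → ℝ)
    (X : Ω → 𝒳) (A Y : Ω → ℝ) (β : ℝ) (ω : Ω) : ℝ :=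
  phiSm β (tauStar Qstar (X ω))
    + (-(phiSm' β (tauStar Qstar (X ω))) * (1 - A ω) / (1 - pstar (X ω)))
        * (Y ω - Qstar 0 (X ω))
    + (phiSm' β (tauStar Qstar (X ω)) * A ω / pstar (X ω)) * (Y ω - Qstar 1 (X ω))

lemma one_add_exp_pos (x : ℝ) : 0 < 1 + Real.exp x := by positivity

lemma sigmoid_hasDerivAt (x : ℝ) :
    HasDerivAt sigmoid (Real.exp x / (1 + Real.exp x) ^ 2) x := by
  have h := (Real.hasDerivAt_exp x).div
    ((hasDerivAt_const x (1:ℝ)).add (Real.hasDerivAt_exp x)) (one_add_exp_pos x).ne'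
  exact h.congr_deriv (by simp only [Pi.add_apply]; ring)

lemma sigmoid_nonneg (x : ℝ) : 0 ≤ sigmoid x :=
  div_nonneg (Real.exp_pos x).le (one_add_exp_pos x).le

lemma sigmoid_le_one (x : ℝ) : sigmoid x ≤ 1 := by
  rw [sigmoid, div_le_one (one_add_exp_pos x)]; linarith

lemma phiSm_hasDerivAt (β u : ℝ) :
    HasDerivAt (phiSm β)
      (sigmoid (β * u) + u * (Real.exp (β * u) / (1 + Real.exp (β * u)) ^ 2 * β)) u := by
  have h1 : HasDerivAt (fun v : ℝ => β * v) β u := by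
    simpa using (hasDerivAt_id u).const_mul β
  have h2 := (sigmoid_hasDerivAt (β * u)).comp u h1
  have h3 := (hasDerivAt_id u).mul h2
  exact h3.congr_deriv (by simp)

lemma phiSm'_eq (β u : ℝ) :
    phiSm' β u = sigmoid (β * u) + u * (Real.exp (β * u) / (1 + Real.exp (β * u)) ^ 2 * β) :=
  (phiSm_hasDerivAt β u).deriv

lemma aux_bound (t : ℝ) : |t * (Real.exp t / (1 + Real.exp t) ^ 2)| ≤ 1 := by
  have he : 0 < Real.exp t := Real.exp_pos t
  have hd : 0 < (1 + Real.exp t) ^ 2 := by positivity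
  rw [abs_mul, abs_of_pos (by positivity : (0:ℝ) < Real.exp t / (1 + Real.exp t) ^ 2)]
  rw [mul_comm, div_mul_eq_mul_div, div_le_one hd]
  rw [mul_comm]
  rcases le_or_gt 0 t with ht | ht
  · rw [abs_of_nonneg ht]
    have h1 : t + 1 ≤ Real.exp t := Real.add_one_le_exp t
    nlinarith
  · rw [abs_of_neg ht]
    have h1 : -t + 1 ≤ Real.exp (-t) := Real.add_one_le_exp (-t)
    rw [Real.exp_neg] at h1
    have h2 : (-t + 1) * Real.exp t ≤ 1 := by
      rw [← le_div_iff₀ he] at *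
      calc (-t + 1 : ℝ) ≤ (Real.exp t)⁻¹ := h1
        _ = 1 / Real.exp t := by rw [inv_eq_one_div]
    nlinarith

lemma phiSm'_abs_le (β u : ℝ) : |phiSm' β u| ≤ 2 := by
  rw [phiSm'_eq]
  have h1 : |sigmoid (β * u)| ≤ 1 := by
    rw [abs_of_nonneg (sigmoid_nonneg _)]; exact sigmoid_le_one _
  have h2 : |u * (Real.exp (β * u) / (1 + Real.exp (β * u)) ^ 2 * β)| ≤ 1 := by
    have := aux_bound (β * u)
    calc |u * (Real.exp (β * u) / (1 + Real.exp (β * u)) ^ 2 * β)|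
        = |(β * u) * (Real.exp (β * u) / (1 + Real.exp (β * u)) ^ 2)| := by ring_nf
      _ ≤ 1 := this
  calc |sigmoid (β * u) + u * (Real.exp (β * u) / (1 + Real.exp (β * u)) ^ 2 * β)|
      ≤ _ + _ := abs_add_le _ _
    _ ≤ 2 := by linarith

lemma phiSm_abs_le (β u : ℝ) : |phiSm β u| ≤ |u| := by
  rw [phiSm, abs_mul]
  have h1 : |sigmoid (β * u)| ≤ 1 := by
    rw [abs_of_nonneg (sigmoid_nonneg _)]; exact sigmoid_le_one _
  nlinarith [abs_nonneg u]

lemma continuous_sigmoid_loc : Continuous sigmoid :=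
  Real.continuous_exp.div (continuous_const.add Real.continuous_exp)
    (fun x => (one_add_exp_pos x).ne')

/-- under strong positivity and square-integrability, the variance of the
de-biased smoothed score `Ψ^β(Z)` is bounded uniformly in `β > 0`; consequently, for every
deterministic sequence `β_n → ∞`, `Var[(1/β_n) Ψ^{β_n}(Z)] → 0`. -/
theorem park_score_variance_bounded_and_scaled_variance_tendsto_zero
    {Ω 𝒳 : Type*} [MeasurableSpace Ω] [MeasurableSpace 𝒳]
    (μ : Measure Ω) [IsProbabilityMeasure μ]
    (X : Ω → 𝒳) (A : Ω → ℝ) (Y : Ω → ℝ)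
    (hX : Measurable X) (hA : Measurable A) (hY : Measurable Y)
    (hAbin : ∀ ω, A ω = 0 ∨ A ω = 1)
    (Qstar : ℝ → 𝒳 → ℝ) (pstar : 𝒳 → ℝ)
    (hQmeas : ∀ a : ℝ, Measurable (Qstar a)) (hpmeas : Measurable pstar)
    (η : ℝ) (hη : 0 < η)
    (hpos : ∀ x, η ≤ pstar x ∧ pstar x ≤ 1 - η)
    (hpcond : (fun ω => pstar (X ω)) =ᵐ[μ]
      μ[A | MeasurableSpace.comap X inferInstance])
    (hQcond : (fun ω => Qstar (A ω) (X ω)) =ᵐ[μ]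
      μ[Y | MeasurableSpace.comap (fun ω => (A ω, X ω)) inferInstance])
    (hQ2 : ∀ a : ℝ, a = 0 ∨ a = 1 → Integrable (fun ω => (Qstar a (X ω)) ^ 2) μ)
    (hY2 : Integrable (fun ω => (Y ω) ^ 2) μ) :
    (∃ M : ℝ, ∀ β : ℝ, 0 < β → variance (parkScore Qstar pstar X A Y β) μ ≤ M) ∧
    ∀ βseq : ℕ → ℝ, (∀ n, 0 < βseq n) → Tendsto βseq atTop atTop →
      Tendsto (fun n =>
          variance (fun ω => (1 / βseq n) * parkScore Qstar pstar X A Y (βseq n) ω) μ)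
        atTop (nhds 0) := by
  -- the dominating function
  set g : Ω → ℝ := fun ω =>
    |Qstar 1 (X ω) - Qstar 0 (X ω)| + (2 / η) * |Y ω - Qstar 0 (X ω)|
      + (2 / η) * |Y ω - Qstar 1 (X ω)| with hg
  -- L² facts
  have hQ0m : Measurable (fun ω => Qstar 0 (X ω)) := (hQmeas 0).comp hX
  have hQ1m : Measurable (fun ω => Qstar 1 (X ω)) := (hQmeas 1).comp hX
  have hQ0L2 : MemLp (fun ω => Qstar 0 (X ω)) 2 μ :=
    (memLp_two_iff_integrable_sq hQ0m.aestronglyMeasurable).mpr (hQ2 0 (Or.inl rfl))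
  have hQ1L2 : MemLp (fun ω => Qstar 1 (X ω)) 2 μ :=
    (memLp_two_iff_integrable_sq hQ1m.aestronglyMeasurable).mpr (hQ2 1 (Or.inr rfl))
  have hYL2 : MemLp Y 2 μ :=
    (memLp_two_iff_integrable_sq hY.aestronglyMeasurable).mpr hY2
  have habs : ∀ (f : Ω → ℝ), MemLp f 2 μ → MemLp (fun ω => |f ω|) 2 μ := by
    intro f hf
    simpa [Real.norm_eq_abs] using hf.norm
  have hgL2 : MemLp g 2 μ := by
    apply MemLp.add
    apply MemLp.add
    · exact habs _ (hQ1L2.sub hQ0L2)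
    · exact (habs _ (hYL2.sub hQ0L2)).const_mul _
    · exact (habs _ (hYL2.sub hQ1L2)).const_mul _
  have hgm : Measurable g := by
    apply Measurable.add
    apply Measurable.add
    · exact (hQ1m.sub hQ0m).abs
    · exact ((hY.sub hQ0m).abs).const_mul _
    · exact ((hY.sub hQ1m).abs).const_mul _
  have hg2int : Integrable (fun ω => g ω ^ 2) μ :=
    (memLp_two_iff_integrable_sq hgm.aestronglyMeasurable).mp hgL2
  -- pointwise domination
  have hbound : ∀ β : ℝ, ∀ ω : Ω, |parkScore Qstar pstar X A Y β ω| ≤ g ω := by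
    intro β ω
    have hp1 : η ≤ pstar (X ω) := (hpos (X ω)).1
    have hp2 : pstar (X ω) ≤ 1 - η := (hpos (X ω)).2
    have hp0 : 0 < pstar (X ω) := lt_of_lt_of_le hη hp1
    have hp0' : 0 < 1 - pstar (X ω) := by linarith
    have hφ' : |phiSm' β (tauStar Qstar (X ω))| ≤ 2 := phiSm'_abs_le β _
    have hφ : |phiSm β (tauStar Qstar (X ω))| ≤ |Qstar 1 (X ω) - Qstar 0 (X ω)| := by
      simpa [tauStar] using phiSm_abs_le β (tauStar Qstar (X ω))
    have hc0 : |(1 - A ω) / (1 - pstar (X ω))| ≤ 1 / η := by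
      rcases hAbin ω with h | h <;> rw [h]
      · rw [abs_of_nonneg (by positivity)]
        simp only [sub_zero]
        rw [div_le_div_iff₀ hp0' hη]; linarith
      · simp [hη.le]
    have hc1 : |A ω / pstar (X ω)| ≤ 1 / η := by
      rcases hAbin ω with h | h <;> rw [h]
      · simp [hη.le]
      · rw [abs_of_nonneg (by positivity)]
        simp only [one_div]
        exact inv_anti₀ hη hp1
    have t0 : |(-(phiSm' β (tauStar Qstar (X ω))) * (1 - A ω) / (1 - pstar (X ω)))
        * (Y ω - Qstar 0 (X ω))| ≤ (2 / η) * |Y ω - Qstar 0 (X ω)| := by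
      rw [abs_mul, mul_div_assoc, abs_mul, abs_neg]
      have h1 : |phiSm' β (tauStar Qstar (X ω))| * |(1 - A ω) / (1 - pstar (X ω))|
          ≤ 2 * (1 / η) := by
        apply mul_le_mul hφ' hc0 (abs_nonneg _) (by norm_num)
      have h2 : 2 * (1 / η) = 2 / η := by ring
      exact mul_le_mul_of_nonneg_right (h2 ▸ h1) (abs_nonneg _)
    have t1 : |(phiSm' β (tauStar Qstar (X ω)) * A ω / pstar (X ω))
        * (Y ω - Qstar 1 (X ω))| ≤ (2 / η) * |Y ω - Qstar 1 (X ω)| := by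
      rw [abs_mul, mul_div_assoc, abs_mul]
      have h1 : |phiSm' β (tauStar Qstar (X ω))| * |A ω / pstar (X ω)|
          ≤ 2 * (1 / η) := by
        apply mul_le_mul hφ' hc1 (abs_nonneg _) (by norm_num)
      have h2 : 2 * (1 / η) = 2 / η := by ring
      exact mul_le_mul_of_nonneg_right (h2 ▸ h1) (abs_nonneg _)
    calc |parkScore Qstar pstar X A Y β ω|
        ≤ |phiSm β (tauStar Qstar (X ω))
            + (-(phiSm' β (tauStar Qstar (X ω))) * (1 - A ω) / (1 - pstar (X ω)))
              * (Y ω - Qstar 0 (X ω))|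
          + |(phiSm' β (tauStar Qstar (X ω)) * A ω / pstar (X ω))
              * (Y ω - Qstar 1 (X ω))| := abs_add_le _ _
      _ ≤ |phiSm β (tauStar Qstar (X ω))|
          + |(-(phiSm' β (tauStar Qstar (X ω))) * (1 - A ω) / (1 - pstar (X ω)))
              * (Y ω - Qstar 0 (X ω))|
          + |(phiSm' β (tauStar Qstar (X ω)) * A ω / pstar (X ω))
              * (Y ω - Qstar 1 (X ω))| := by
            exact add_le_add (abs_add_le _ _) le_rfl
      _ ≤ g ω := by rw [hg]; exact add_le_add (add_le_add hφ t0) t1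
  -- measurability of the score
  have hΨm : ∀ β : ℝ, Measurable (parkScore Qstar pstar X A Y β) := by
    intro β
    have hτm : Measurable (fun ω => tauStar Qstar (X ω)) := hQ1m.sub hQ0m
    have hphicont : Continuous (phiSm β) := by
      exact continuous_id.mul (continuous_sigmoid_loc.comp (continuous_const.mul continuous_id))
    have hphi'm : Measurable (phiSm' β) := measurable_deriv (phiSm β)
    unfold parkScore
    exact ((hphicont.measurable.comp hτm).add
        ((((hphi'm.comp hτm).neg.mul (measurable_const.sub hA)).div
          (measurable_const.sub (hpmeas.comp hX))).mul (hY.sub hQ0m))).add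
      ((((hphi'm.comp hτm).mul hA).div (hpmeas.comp hX)).mul (hY.sub hQ1m))
  -- square domination and integrability
  have hsq : ∀ β : ℝ, ∀ ω : Ω,
      (parkScore Qstar pstar X A Y β ω) ^ 2 ≤ g ω ^ 2 := by
    intro β ω
    have h := hbound β ω
    nlinarith [abs_nonneg (parkScore Qstar pstar X A Y β ω), abs_nonneg (g ω),
      sq_abs (parkScore Qstar pstar X A Y β ω)]
  have hΨ2int : ∀ β : ℝ, Integrable (fun ω => (parkScore Qstar pstar X A Y β ω) ^ 2) μ := by
    intro β
    apply hg2int.mono ((hΨm β).pow_const 2).aestronglyMeasurable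
    filter_upwards with ω
    rw [Real.norm_eq_abs, Real.norm_eq_abs, abs_of_nonneg (sq_nonneg _),
      abs_of_nonneg (sq_nonneg _)]
    exact hsq β ω
  -- the uniform variance bound
  set M : ℝ := ∫ ω, g ω ^ 2 ∂μ with hM
  have hvar : ∀ β : ℝ, 0 < β → variance (parkScore Qstar pstar X A Y β) μ ≤ M := by
    intro β _
    calc variance (parkScore Qstar pstar X A Y β) μ
        ≤ ∫ ω, ((parkScore Qstar pstar X A Y β) ^ 2) ω ∂μ :=
          variance_le_expectation_sq (hΨm β).aestronglyMeasurable
      _ = ∫ ω, (parkScore Qstar pstar X A Y β ω) ^ 2 ∂μ := by rfl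
      _ ≤ M := integral_mono (hΨ2int β) hg2int (fun ω => hsq β ω)
  refine ⟨⟨M, hvar⟩, ?_⟩
  intro βseq hβpos hβtop
  have hM0 : 0 ≤ M := integral_nonneg (fun ω => sq_nonneg _)
  have hkey : ∀ n, variance (fun ω => (1 / βseq n) * parkScore Qstar pstar X A Y (βseq n) ω) μ
      = (1 / βseq n) ^ 2 * variance (parkScore Qstar pstar X A Y (βseq n)) μ := by
    intro n
    exact variance_smul (1 / βseq n) (parkScore Qstar pstar X A Y (βseq n)) μ
  apply squeeze_zero (fun n => variance_nonneg _ _)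
    (g := fun n => (1 / βseq n) ^ 2 * M)
  · intro n
    rw [hkey n]
    exact mul_le_mul_of_nonneg_left (hvar (βseq n) (hβpos n)) (sq_nonneg _)
  · have hinv : Tendsto (fun n => (βseq n)⁻¹) atTop (nhds 0) :=
      hβtop.inv_tendsto_atTop
    have : Tendsto (fun n => (1 / βseq n) ^ 2 * M) atTop (nhds (0 ^ 2 * M)) := by
      apply Tendsto.mul_const
      apply Tendsto.pow
      simpa [one_div] using hinv
    simpa using this
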